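/- Assume relations (R1), (R2) and (R3) hold on ℝ². Then on all of ℝ², ∂ₓΞ = ∂ₓ²g₁·(√2/(√2−ε²) + 4∂ₓg₁) + (2/(√2−ε²))·(∂_y²g₁ + g₁Π₁ − Π₃) + (ε²/(2−√2 ε²))·∂ₓg₁·∂ₓ(g₁²) − (ε²/(2√2−2ε²))·g₁²·∂ₓ(g₁²) − (√2 ε²/(√2−ε²))·g₁·∂ₓ²f₁. -/

import Mathlib

noncomputable section
open Set

namespace Stmt2

def pdx (f : ℝ → ℝ → ℝ) : ℝ → ℝ → ℝ := fun x y => deriv (fun t => f t y) x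
def pdy (f : ℝ → ℝ → ℝ) : ℝ → ℝ → ℝ := fun x y => deriv (fun t => f x t) y
def Smooth2 (f : ℝ → ℝ → ℝ) : Prop := ContDiff ℝ (⊤ : ℕ∞) (Function.uncurry f)

/-- Π₁ = −ε²∂_y²f₁ − ε⁴∂_y²f₂ − ε²∂ₓ²f₂ + 6ε²f₁f₂ + ε²(f₁+ε²f₂)³ + 3ε⁴f₂² + ε²f₂g₁² -/
def Pi1 (ε : ℝ) (f1 f2 g1 : ℝ → ℝ → ℝ) : ℝ → ℝ → ℝ := fun x y =>
  -ε^2 * pdy (pdy f1) x y - ε^4 * pdy (pdy f2) x y - ε^2 * pdx (pdx f2) x y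
    + 6*ε^2 * f1 x y * f2 x y + ε^2 * (f1 x y + ε^2 * f2 x y)^3
    + 3*ε^4 * (f2 x y)^2 + ε^2 * f2 x y * (g1 x y)^2

/-- Π₃ = 2ε²f₁f₂g₁ + ε⁴g₁f₂² -/
def Pi3 (ε : ℝ) (f1 f2 g1 : ℝ → ℝ → ℝ) : ℝ → ℝ → ℝ := fun x y =>
  2*ε^2 * f1 x y * f2 x y * g1 x y + ε^4 * g1 x y * (f2 x y)^2

/-- Ξ = 2f₂ + f₁² + √2(∂ₓ(f₁g₁) + g₁²∂ₓg₁) -/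
def Xi (f1 f2 g1 : ℝ → ℝ → ℝ) : ℝ → ℝ → ℝ := fun x y =>
  2 * f2 x y + (f1 x y)^2
    + Real.sqrt 2 * (pdx (fun a b => f1 a b * g1 a b) x y + (g1 x y)^2 * pdx g1 x y)

lemma key (s e a b c d p q yy F1 F1x F2 F2x : ℝ)
    (hs : s * s = 2) (hspos : 0 < s) (hse : 0 < s - e)
    (h1 : F1 = s/2*b - a^2/2)
    (h2 : F1x = s/2*c - a*b)
    (h3 : -b = -d + F1*(2*F1 + a^2) + 2*F2 + F1^2 + p)
    (h4 : -(s - e)*F2x = -F1x - yy + a*(2*F2 + F1^2) + q) :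
    2*F2x + (F1x*F1 + F1*F1x)
        + s*(((d*a + F1x*b) + (F1x*b + F1*c)) + ((b*a + a*b)*b + a*a*c))
      = c*(s/(s-e) + 4*b) + 2/(s-e)*(yy + a*p - q) + e/(2 - s*e)*b*(2*a*b)
        - e/(2*s - 2*e)*a^2*(2*a*b) - s*e/(s-e)*a*d := by
  have hne : s - e ≠ 0 := ne_of_gt hse
  have hsne : s ≠ 0 := ne_of_gt hspos
  have e1 : 2 - s*e = s*(s-e) := by rw [← hs]; ring
  have e2 : 2*s - 2*e = 2*(s-e) := by ring
  have hS : 2*F2 + F1^2 = -b + d - F1*(2*F1+a^2) - p := by linarith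
  have hF2x : F2x = (F1x + yy - a*(-b + d - F1*(2*F1+a^2) - p) - q)/(s-e) := by
    rw [eq_div_iff hne]
    rw [hS] at h4
    linear_combination -h4
  rw [hF2x, e1, e2]
  subst h1 h2
  field_simp
  have p2 : s^2 = 2 := by nlinarith
  have p3 : s^3 = 2*s := by nlinarith
  have p4 : s^4 = 4 := by nlinarith
  ring_nf
  simp only [p2, p3, p4]
  ring_nf

lemma smooth_slice {f : ℝ → ℝ → ℝ} (hf : Smooth2 f) (y : ℝ) :
    ContDiff ℝ (⊤ : ℕ∞) (fun t => f t y) :=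
  hf.comp (contDiff_id.prodMk contDiff_const)

lemma hasDerivAt_slice {f : ℝ → ℝ → ℝ} (hf : Smooth2 f) (x y : ℝ) :
    HasDerivAt (fun t => f t y) (pdx f x y) x :=
  ((smooth_slice hf y).differentiable (by simp) x).hasDerivAt

lemma Smooth2.pdx {f : ℝ → ℝ → ℝ} (hf : Smooth2 f) : Smooth2 (pdx f) := by
  have h : Function.uncurry (Stmt2.pdx f) =
      fun p : ℝ × ℝ => fderiv ℝ (Function.uncurry f) p (1, 0) := by
    funext p
    obtain ⟨x, y⟩ := p
    have h1 : HasFDerivAt (fun t : ℝ => (t, y))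
        ((ContinuousLinearMap.id ℝ ℝ).prod 0) x :=
      (hasFDerivAt_id x).prodMk (hasFDerivAt_const y x)
    have h2 := ((hf.differentiable (by simp) (x, y)).hasFDerivAt).comp x h1
    have h3 := h2.hasDerivAt.deriv
    show deriv (fun t => f t y) x = _
    exact h3.trans (by simp)
  unfold Smooth2
  rw [h]
  exact (hf.fderiv_right (by simp)).clm_apply contDiff_const

theorem dx_xi_formula (ε : ℝ) (hε : ε ∈ Ioo (0:ℝ) ((2:ℝ) ^ ((1:ℝ)/4)))
    (f1 f2 g1 : ℝ → ℝ → ℝ)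
    (hf1 : Smooth2 f1) (hf2 : Smooth2 f2) (hg1 : Smooth2 g1)
    (hR1 : ∀ x y : ℝ, f1 x y = Real.sqrt 2 / 2 * pdx g1 x y - (g1 x y)^2 / 2)
    (hR2 : ∀ x y : ℝ, -pdx g1 x y =
      -pdx (pdx f1) x y + f1 x y * (2 * f1 x y + (g1 x y)^2)
        + 2 * f2 x y + (f1 x y)^2 + Pi1 ε f1 f2 g1 x y)
    (hR3 : ∀ x y : ℝ, -(Real.sqrt 2 - ε^2) * pdx f2 x y =
      -pdx f1 x y - pdy (pdy g1) x y + g1 x y * (2 * f2 x y + (f1 x y)^2)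
        + Pi3 ε f1 f2 g1 x y) :
    ∀ x y : ℝ, pdx (Xi f1 f2 g1) x y =
      pdx (pdx g1) x y * (Real.sqrt 2 / (Real.sqrt 2 - ε^2) + 4 * pdx g1 x y)
        + 2 / (Real.sqrt 2 - ε^2)
          * (pdy (pdy g1) x y + g1 x y * Pi1 ε f1 f2 g1 x y - Pi3 ε f1 f2 g1 x y)
        + ε^2 / (2 - Real.sqrt 2 * ε^2)
          * pdx g1 x y * pdx (fun a b => (g1 a b)^2) x y
        - ε^2 / (2 * Real.sqrt 2 - 2 * ε^2)
          * (g1 x y)^2 * pdx (fun a b => (g1 a b)^2) x y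
        - Real.sqrt 2 * ε^2 / (Real.sqrt 2 - ε^2) * g1 x y * pdx (pdx f1) x y := by
  intro x y
  have hs : Real.sqrt 2 * Real.sqrt 2 = 2 := Real.mul_self_sqrt (by norm_num)
  have hspos : 0 < Real.sqrt 2 := Real.sqrt_pos.mpr (by norm_num)
  have hse : 0 < Real.sqrt 2 - ε^2 := by
    have h1 : ε^2 < ((2:ℝ) ^ ((1:ℝ)/4))^2 := by
      apply pow_lt_pow_left₀ hε.2 (le_of_lt hε.1)
      norm_num
    have h2 : ((2:ℝ) ^ ((1:ℝ)/4))^2 = Real.sqrt 2 := by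
      rw [← Real.rpow_natCast ((2:ℝ) ^ ((1:ℝ)/4)) 2,
        ← Real.rpow_mul (by norm_num : (0:ℝ) ≤ 2), Real.sqrt_eq_rpow]
      norm_num
    rw [h2] at h1
    linarith
  have hg1x : Smooth2 (pdx g1) := hg1.pdx
  have hf1x : Smooth2 (pdx f1) := hf1.pdx
  have hG : HasDerivAt (fun t => g1 t y) (pdx g1 x y) x := hasDerivAt_slice hg1 x y
  have hGx : HasDerivAt (fun t => pdx g1 t y) (pdx (pdx g1) x y) x :=
    hasDerivAt_slice hg1x x y
  have hF1 : HasDerivAt (fun t => f1 t y) (pdx f1 x y) x := hasDerivAt_slice hf1 x y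
  have hF1x : HasDerivAt (fun t => pdx f1 t y) (pdx (pdx f1) x y) x :=
    hasDerivAt_slice hf1x x y
  have hF2 : HasDerivAt (fun t => f2 t y) (pdx f2 x y) x := hasDerivAt_slice hf2 x y
  -- derivative of g1^2
  have h5 : pdx (fun a b => (g1 a b)^2) x y = 2 * g1 x y * pdx g1 x y := by
    have hsq : (fun t : ℝ => (g1 t y)^2) = (fun t => g1 t y * g1 t y) := by
      funext t; ring
    show deriv (fun t => (g1 t y)^2) x = _
    rw [hsq, HasDerivAt.deriv (f := fun t => g1 t y * g1 t y) (hG.mul hG)]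
    ring
  -- derivative of f1 via R1
  have hslice1 : (fun t => f1 t y)
      = (fun t => Real.sqrt 2 / 2 * pdx g1 t y - g1 t y * g1 t y / 2) := by
    funext t; rw [hR1 t y]; ring
  have h2 : pdx f1 x y = Real.sqrt 2 / 2 * pdx (pdx g1) x y - g1 x y * pdx g1 x y := by
    show deriv (fun t => f1 t y) x = _
    rw [hslice1, HasDerivAt.deriv (f := fun t => Real.sqrt 2 / 2 * pdx g1 t y - g1 t y * g1 t y / 2)
      ((hGx.const_mul (Real.sqrt 2 / 2)).sub ((hG.mul hG).div_const 2))]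
    ring
  -- product rule for f1 * g1
  have hprod : ∀ t u : ℝ, pdx (fun a b => f1 a b * g1 a b) t u
      = pdx f1 t u * g1 t u + f1 t u * pdx g1 t u := by
    intro t u
    exact ((hasDerivAt_slice hf1 t u).mul (hasDerivAt_slice hg1 t u)).deriv
  -- slice of Xi
  have hXislice : (fun t => Xi f1 f2 g1 t y)
      = (fun t => 2 * f2 t y + f1 t y * f1 t y + Real.sqrt 2 *
          ((pdx f1 t y * g1 t y + f1 t y * pdx g1 t y)
            + g1 t y * g1 t y * pdx g1 t y)) := by
    funext t
    simp only [Xi, hprod t y]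
    ring
  have hd := ((hF2.const_mul (2:ℝ)).add (hF1.mul hF1)).add
    ((((hF1x.mul hG).add (hF1.mul hGx)).add ((hG.mul hG).mul hGx)).const_mul
      (Real.sqrt 2))
  have hXi : pdx (Xi f1 f2 g1) x y =
      2 * pdx f2 x y + (pdx f1 x y * f1 x y + f1 x y * pdx f1 x y)
        + Real.sqrt 2 * (((pdx (pdx f1) x y * g1 x y + pdx f1 x y * pdx g1 x y)
            + (pdx f1 x y * pdx g1 x y + f1 x y * pdx (pdx g1) x y))
          + ((pdx g1 x y * g1 x y + g1 x y * pdx g1 x y) * pdx g1 x y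
            + g1 x y * g1 x y * pdx (pdx g1) x y)) := by
    show deriv (fun t => Xi f1 f2 g1 t y) x = _
    rw [hXislice]
    exact hd.deriv
  rw [hXi, h5]
  exact key (Real.sqrt 2) (ε^2) (g1 x y) (pdx g1 x y) (pdx (pdx g1) x y)
    (pdx (pdx f1) x y) (Pi1 ε f1 f2 g1 x y) (Pi3 ε f1 f2 g1 x y)
    (pdy (pdy g1) x y) (f1 x y) (pdx f1 x y) (f2 x y) (pdx f2 x y)
    hs hspos hse (hR1 x y) h2 (hR2 x y) (hR3 x y)

end Stmt2
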